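/- arXiv:2203.06141 — 3 statements merged into one kernel-verified Lean document; each statement's English description precedes it below -/
import Mathlib

section
/- For every B > 0 there exists a constant C > 0 depending only on B such that the following holds. Let ζ ∈ Γ_B and let X ∈ ℝ^n be a random vector whose coordinates are i.i.d. copies of ζ. Let M be an n×n real symmetric matrix, u ∈ ℝ^n, t ∈ ℝ, s ≥ 0 and δ > 0. Then ℙ( |⟨M X, X⟩ − t| < δ and ⟨X, u⟩ ≥ s ) ≤ C δ e^{-s} ∫_{−1/δ}^{1/δ} | 𝔼 e^{2πi θ ⟨M X, X⟩ + ⟨X, u⟩} | dθ. -/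
open MeasureTheory ProbabilityTheory Matrix
open scoped BigOperators ENNReal

noncomputable section

/-- Euclidean norm of a finitely indexed real vector. -/
def euclNorm {ι : Type*} [Fintype ι] (x : ι → ℝ) : ℝ :=
  Real.sqrt (∑ i, (x i) ^ 2)

/-- The least singular value of a square real matrix:
`σ_min(M) = inf { ‖Mx‖₂ : ‖x‖₂ = 1 }`. -/
def sigmaMin {n : ℕ} (M : Matrix (Fin n) (Fin n) ℝ) : ℝ :=
  sInf {r : ℝ | ∃ x : Fin n → ℝ, euclNorm x = 1 ∧ r = euclNorm (M.mulVec x)}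

/-- `ζ ∈ Γ_B`: a measurable real random variable with mean `0`, variance `1`
and subgaussian moment `‖ζ‖_{ψ₂} ≤ B`, i.e. `(𝔼|ζ|^p)^{1/p} ≤ B √p` for all `p ≥ 1`. -/
def MemGammaB {Ω : Type*} [MeasurableSpace Ω] (μ : Measure Ω) (ζ : Ω → ℝ) (B : ℝ) : Prop :=
  Measurable ζ ∧ (∫ ω, ζ ω ∂μ) = 0 ∧ (∫ ω, (ζ ω) ^ 2 ∂μ) = 1 ∧
    ∀ p : ℝ, 1 ≤ p → (∫⁻ ω, ENNReal.ofReal (|ζ ω| ^ p) ∂μ) ≤ ENNReal.ofReal ((B * Real.sqrt p) ^ p)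

/-- `A ~ Sym_n(ζ)`: a random `n × n` real symmetric matrix whose entries on and above
the diagonal are i.i.d. copies of `ζ`. -/
def IsSymRandomMatrix {Ω : Type*} [MeasurableSpace Ω] (μ : Measure Ω) (ζ : Ω → ℝ)
    {n : ℕ} (A : Ω → Matrix (Fin n) (Fin n) ℝ) : Prop :=
  (∀ i j, Measurable fun ω => A ω i j) ∧
  (∀ ω, (A ω).IsSymm) ∧
  (∀ i j : Fin n, i ≤ j → Measure.map (fun ω => A ω i j) μ = Measure.map ζ μ) ∧
  iIndepFun
    (fun p : {p : Fin n × Fin n // p.1 ≤ p.2} => fun ω => A ω p.1.1 p.1.2) μ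

/-- Distance from `w ∈ ℝ^ι` to the integer lattice `ℤ^ι` (Euclidean distance;
coordinatewise the nearest integer is `round`). -/
def torusNorm {ι : Type*} [Fintype ι] (w : ι → ℝ) : ℝ :=
  Real.sqrt (∑ i, (w i - (round (w i) : ℝ)) ^ 2)

/-- The least common denominator
`D_{α,γ}(v) = inf{ φ > 0 : ‖φ v‖_T ≤ min(γ φ ‖v‖₂, √(α n)) }`. -/
def LCD {ι : Type*} [Fintype ι] (α γ : ℝ) (v : ι → ℝ) : ℝ :=
  sInf {φ : ℝ | 0 < φ ∧
    torusNorm (φ • v) ≤ min (γ * φ * euclNorm v) (Real.sqrt (α * (Fintype.card ι)))}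

/-- A random vector with i.i.d. coordinates distributed as `ζ`. -/
def IsIIDVector {Ω : Type*} [MeasurableSpace Ω] (μ : Measure Ω) (ζ : Ω → ℝ)
    {ι : Type*} (X : ι → Ω → ℝ) : Prop :=
  (∀ i, Measurable (X i)) ∧ (∀ i, Measure.map (X i) μ = Measure.map ζ μ) ∧
  iIndepFun X μ

/-!
Tilt by `e^L` with `L = ⟨X, u⟩`: on the event, `1 ≤ e^{-s} e^L`, and the indicator of
`|y| < δ` is at most `(π² δ / 2) K(y)`, where `K(y) = ∫_{-T}^{T} (1 - |θ|/T) cos(2πθy) dθ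
= sin²(πTy) / (π² y² T)` is the Fejér kernel of width `T = 1/(2δ)`. By Fubini,
`𝔼[K(Q - t) e^L]` is the integral over `θ ∈ [-T, T]` of weights in `[0, 1]` times
`Re(e^{-2πiθt} 𝔼 e^{2πiθQ + L})`, hence at most `∫_{-1/δ}^{1/δ} |𝔼 e^{2πiθQ + L}| dθ`.
All this only needs `e^L` integrable, which holds for independent subgaussian coordinates:
the moment bound gives `𝔼 e^{λζ²} ≤ 2` for `λ = 1/(4eB²)`, and `e^{cζ} ≤ e^{c²/(4λ)} e^{λζ²}`.
-/

open Real

section Subgaussian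

variable {Ω : Type*} [MeasurableSpace Ω] {μ : Measure Ω} {ζ : Ω → ℝ}

lemma lintegral_sq_pow_le_of_moment_le {B : ℝ}
    (hmom : ∀ p : ℝ, 1 ≤ p →
      (∫⁻ ω, ENNReal.ofReal (|ζ ω| ^ p) ∂μ) ≤ ENNReal.ofReal ((B * √p) ^ p))
    {m : ℕ} (hm : m ≠ 0) :
    ∫⁻ ω, ENNReal.ofReal ((ζ ω ^ 2) ^ m) ∂μ ≤ ENNReal.ofReal ((2 * B ^ 2 * m) ^ m) := by
  have h := hmom (2 * m : ℕ) (by exact_mod_cast Nat.one_le_iff_ne_zero.2 (by omega))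
  simp_rw [rpow_natCast, pow_mul, sq_abs, mul_pow, sq_sqrt (Nat.cast_nonneg _)] at h
  convert h using 4
  push_cast
  ring

lemma div_two_mul_exp_one_pow_div_factorial_le (n : ℕ) :
    (n / (2 * exp 1)) ^ n / n.factorial ≤ 2⁻¹ ^ n := by
  have h : (n : ℝ) ^ n / n.factorial ≤ exp 1 ^ n := by
    rw [exp_one_pow]
    exact pow_div_factorial_le_exp _ (Nat.cast_nonneg n) n
  calc (n / (2 * exp 1)) ^ n / n.factorial
      = 2⁻¹ ^ n * ((n : ℝ) ^ n / n.factorial / exp 1 ^ n) := by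
        rw [div_pow, mul_pow, inv_pow]
        field_simp
    _ ≤ 2⁻¹ ^ n := by
        grw [div_le_one_of_le₀ h (by positivity), mul_one]

lemma lintegral_exp_sq_le_two [IsProbabilityMeasure μ] (hζ : Measurable ζ) {K : ℝ}
    (hK : 0 < K) (hmom : ∀ m : ℕ, m ≠ 0 →
      ∫⁻ ω, ENNReal.ofReal ((ζ ω ^ 2) ^ m) ∂μ ≤ ENNReal.ofReal ((K * m) ^ m)) :
    ∫⁻ ω, ENNReal.ofReal (exp ((2 * exp 1 * K)⁻¹ * ζ ω ^ 2)) ∂μ ≤ 2 := by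
  set c := (2 * exp 1 * K)⁻¹
  have hterm : ∀ n : ℕ,
      ∫⁻ ω, ENNReal.ofReal ((c * ζ ω ^ 2) ^ n / n.factorial) ∂μ ≤ 2⁻¹ ^ n := by
    intro n
    rcases eq_or_ne n 0 with rfl | hn
    · simp
    have hcn : 0 ≤ c ^ n / n.factorial := by positivity
    calc ∫⁻ ω, ENNReal.ofReal ((c * ζ ω ^ 2) ^ n / n.factorial) ∂μ
        = ENNReal.ofReal (c ^ n / n.factorial) *
            ∫⁻ ω, ENNReal.ofReal ((ζ ω ^ 2) ^ n) ∂μ := by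
          simp_rw [mul_pow, mul_div_right_comm, ENNReal.ofReal_mul hcn]
          exact lintegral_const_mul _ (by fun_prop)
      _ ≤ ENNReal.ofReal (c ^ n / n.factorial) * ENNReal.ofReal ((K * n) ^ n) := by
          gcongr; exact hmom n hn
      _ = ENNReal.ofReal ((n / (2 * exp 1)) ^ n / n.factorial) := by
          rw [← ENNReal.ofReal_mul hcn, div_mul_eq_mul_div, ← mul_pow]
          congr 3
          simp only [c]
          field_simp
      _ ≤ 2⁻¹ ^ n := by
          rw [← ENNReal.ofReal_ofNat, ← ENNReal.ofReal_inv_of_pos two_pos,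
            ← ENNReal.ofReal_pow (by norm_num)]
          exact ENNReal.ofReal_le_ofReal (div_two_mul_exp_one_pow_div_factorial_le n)
  calc ∫⁻ ω, ENNReal.ofReal (exp (c * ζ ω ^ 2)) ∂μ
      = ∫⁻ ω, ∑' n : ℕ, ENNReal.ofReal ((c * ζ ω ^ 2) ^ n / n.factorial) ∂μ := by
        congr with ω
        rw [exp_eq_exp_ℝ, NormedSpace.exp_eq_tsum_div,
          ENNReal.ofReal_tsum_of_nonneg (fun n => by positivity) (summable_pow_div_factorial _)]
    _ = ∑' n : ℕ, ∫⁻ ω, ENNReal.ofReal ((c * ζ ω ^ 2) ^ n / n.factorial) ∂μ :=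
        lintegral_tsum fun n => by fun_prop
    _ ≤ ∑' n : ℕ, 2⁻¹ ^ n := ENNReal.tsum_le_tsum hterm
    _ = 2 := ENNReal.tsum_geometric_two

lemma integrable_exp_mul_of_lintegral_exp_sq_lt_top (hζ : Measurable ζ) {a : ℝ} (ha : 0 < a)
    (hsq : ∫⁻ ω, ENNReal.ofReal (exp (a * ζ ω ^ 2)) ∂μ < ⊤) (c : ℝ) :
    Integrable (fun ω => exp (c * ζ ω)) μ := by
  have hsq_int : Integrable (fun ω => exp (a * ζ ω ^ 2)) μ :=
    ⟨by fun_prop, (hasFiniteIntegral_iff_ofReal (ae_of_all _ fun _ => (exp_pos _).le)).2 hsq⟩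
  refine (hsq_int.const_mul (exp (c ^ 2 / (4 * a)))).mono' (by fun_prop)
    (ae_of_all _ fun ω => ?_)
  -- completing the square: `c x ≤ c² / (4a) + a x²`
  rw [norm_of_nonneg (exp_pos _).le, ← exp_add, exp_le_exp, div_add' _ _ _ (by positivity),
    le_div_iff₀ (by positivity)]
  nlinarith [sq_nonneg (c - 2 * a * ζ ω)]

lemma integrable_exp_mul_of_moment_le [IsProbabilityMeasure μ] (hζ : Measurable ζ) {B : ℝ}
    (hB : B ≠ 0)
    (hmom : ∀ p : ℝ, 1 ≤ p →
      (∫⁻ ω, ENNReal.ofReal (|ζ ω| ^ p) ∂μ) ≤ ENNReal.ofReal ((B * √p) ^ p)) (c : ℝ) :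
    Integrable (fun ω => exp (c * ζ ω)) μ := by
  have hK : 0 < 2 * B ^ 2 := by positivity
  refine integrable_exp_mul_of_lintegral_exp_sq_lt_top hζ
    (a := (2 * exp 1 * (2 * B ^ 2))⁻¹) (by positivity) ?_ c
  exact (lintegral_exp_sq_le_two hζ hK fun m hm =>
    lintegral_sq_pow_le_of_moment_le hmom hm).trans_lt ENNReal.ofNat_lt_top

end Subgaussian

lemma IsIIDVector.integrable_exp_sum_mul {Ω : Type*} [MeasurableSpace Ω] {μ : Measure Ω}
    [IsFiniteMeasure μ] {ζ : Ω → ℝ} (hζ : Measurable ζ)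
    (hexp : ∀ c : ℝ, Integrable (fun ω => exp (c * ζ ω)) μ)
    {ι : Type*} [Fintype ι] {X : ι → Ω → ℝ} (hX : IsIIDVector μ ζ X) (u : ι → ℝ) :
    Integrable (fun ω => exp (∑ i, X i ω * u i)) μ := by
  obtain ⟨hXm, hlaw, hindep⟩ := hX
  have hcoord : ∀ i, Integrable (fun ω => exp (1 * (X i ω * u i))) μ := fun i => by
    have hident : IdentDistrib (X i) ζ μ μ := ⟨(hXm i).aemeasurable, hζ.aemeasurable, hlaw i⟩
    simpa only [one_mul, mul_comm (X i _), Function.comp_def] using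
      (hident.comp (show Measurable fun x => exp (u i * x) by fun_prop)).integrable_iff.2
        (hexp (u i))
  simpa using (hindep.comp (fun i x => x * u i) fun i => by fun_prop).integrable_exp_mul_sum
    (fun i => (hXm i).mul_const _) (s := Finset.univ) fun i _ => hcoord i

section FejerKernel

def fejerKernel (T y : ℝ) : ℝ :=
  ∫ θ in (-T)..T, (1 - |θ| / T) * cos (2 * π * θ * y)

variable {T : ℝ}

lemma continuous_fejerKernel (T : ℝ) : Continuous (fejerKernel T) :=
  intervalIntegral.continuous_parametric_intervalIntegral_of_continuous' (by fun_prop) _ _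

lemma fejerKernel_eq_two_mul_integral (hT : 0 < T) (y : ℝ) :
    fejerKernel T y = 2 * ∫ θ in (0 : ℝ)..T, (1 - θ / T) * cos (2 * π * θ * y) := by
  set f := fun θ : ℝ => (1 - |θ| / T) * cos (2 * π * θ * y)
  have hf : Continuous f := by fun_prop
  have heven : ∀ θ, f (-θ) = f θ := fun θ => by
    simp only [f, abs_neg, mul_neg, neg_mul, cos_neg]
  have hneg : ∫ θ in (-T)..0, f θ = ∫ θ in (0 : ℝ)..T, f θ := by
    simpa only [heven, neg_zero] using
      (intervalIntegral.integral_comp_neg (a := 0) (b := T) f).symm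
  have habs : ∫ θ in (0 : ℝ)..T, f θ = ∫ θ in (0 : ℝ)..T, (1 - θ / T) * cos (2 * π * θ * y) :=
    intervalIntegral.integral_congr fun θ hθ => by
      rw [Set.uIcc_of_le hT.le] at hθ
      simp only [f, abs_of_nonneg hθ.1]
  rw [fejerKernel, ← intervalIntegral.integral_add_adjacent_intervals
    (hf.intervalIntegrable (-T) 0) (hf.intervalIntegrable 0 T), hneg, habs]
  ring

lemma fejerKernel_zero (hT : 0 < T) : fejerKernel T 0 = T := by
  have hderiv : ∀ x ∈ Set.uIcc 0 T,
      HasDerivAt (fun θ => θ - θ ^ 2 / (2 * T)) ((1 - x / T) * cos (2 * π * x * 0)) x :=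
    fun x _ => by
      refine ((hasDerivAt_id' x).sub ((hasDerivAt_pow 2 x).div_const (2 * T))).congr_deriv ?_
      simp only [mul_zero, cos_zero, mul_one]
      field_simp
      ring
  rw [fejerKernel_eq_two_mul_integral hT, intervalIntegral.integral_eq_sub_of_hasDerivAt hderiv
    (Continuous.intervalIntegrable (by fun_prop) _ _)]
  field_simp
  ring

lemma fejerKernel_of_ne_zero (hT : 0 < T) {y : ℝ} (hy : y ≠ 0) :
    fejerKernel T y = sin (π * T * y) ^ 2 / (π ^ 2 * y ^ 2 * T) := by
  have hderiv : ∀ x ∈ Set.uIcc 0 T, HasDerivAt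
      (fun θ => (1 - θ / T) * (sin (2 * π * θ * y) / (2 * π * y)) -
        cos (2 * π * θ * y) / ((2 * π * y) ^ 2 * T))
      ((1 - x / T) * cos (2 * π * x * y)) x := fun x _ => by
    have hlin := ((hasDerivAt_id' x).const_mul (2 * π)).mul_const y
    refine ((((hasDerivAt_id' x).div_const T).const_sub 1).mul (hlin.sin.div_const _) |>.sub
      (hlin.cos.div_const _)).congr_deriv ?_
    field_simp
    ring
  rw [fejerKernel_eq_two_mul_integral hT, intervalIntegral.integral_eq_sub_of_hasDerivAt hderiv
    (Continuous.intervalIntegrable (by fun_prop) _ _), sin_sq_eq_half_sub,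
    show 2 * (π * T * y) = 2 * π * T * y by ring]
  simp only [div_self hT.ne', sub_self, zero_mul, mul_zero, zero_div, sin_zero, cos_zero]
  field_simp
  ring

lemma fejerKernel_nonneg (hT : 0 < T) (y : ℝ) : 0 ≤ fejerKernel T y := by
  rcases eq_or_ne y 0 with rfl | hy
  · exact (fejerKernel_zero hT).symm ▸ hT.le
  · rw [fejerKernel_of_ne_zero hT hy]
    positivity

lemma fejerKernel_le (hT : 0 < T) (y : ℝ) : fejerKernel T y ≤ T := by
  rcases eq_or_ne y 0 with rfl | hy
  · exact (fejerKernel_zero hT).le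
  · rw [fejerKernel_of_ne_zero hT hy, div_le_iff₀ (by positivity)]
    nlinarith [sin_sq_le_sq (x := π * T * y)]

lemma le_fejerKernel (hT : 0 < T) {y : ℝ} (hy : |y| ≤ 1 / (2 * T)) :
    4 * T / π ^ 2 ≤ fejerKernel T y := by
  rcases eq_or_ne y 0 with rfl | hy0
  · have hπ : 4 ≤ π ^ 2 := by nlinarith [pi_gt_three]
    rw [fejerKernel_zero hT, div_le_iff₀ (by positivity)]
    nlinarith
  -- Jordan's inequality `2x/π ≤ sin x` on `[0, π/2]`, at `x = π T |y|`
  have hjordan : 2 * T * |y| ≤ |sin (π * T * y)| := by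
    have habs : |π * T * y| = π * T * |y| := by
      rw [abs_mul, abs_of_pos (by positivity : 0 < π * T)]
    have hx : π * T * |y| ≤ π / 2 := by
      rw [le_div_iff₀ (by positivity)] at hy
      nlinarith [pi_pos]
    rw [abs_sin_eq_sin_abs_of_abs_le_pi (by linarith [pi_pos]), habs]
    calc 2 * T * |y| = 2 / π * (π * T * |y|) := by field_simp
      _ ≤ sin (π * T * |y|) := mul_le_sin (by positivity) hx
  have hlhs : 4 * T / π ^ 2 * (π ^ 2 * y ^ 2 * T) = (2 * T * |y|) ^ 2 := by
    field_simp
    rw [sq_abs]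
    ring
  rw [fejerKernel_of_ne_zero hT hy0, le_div_iff₀ (by positivity), hlhs, ← sq_abs (sin _)]
  exact pow_le_pow_left₀ (by positivity) hjordan 2

end FejerKernel

section TiltedEsseen

variable {Ω : Type*} [MeasurableSpace Ω] {μ : Measure Ω} {Q L : Ω → ℝ}

def tiltedCharFun (μ : Measure Ω) (Q L : Ω → ℝ) (θ : ℝ) : ℂ :=
  ∫ ω, Complex.exp (((2 * π * θ * Q ω : ℝ) : ℂ) * Complex.I + ((L ω : ℝ) : ℂ)) ∂μ

lemma norm_exp_ofReal_mul_I_add_ofReal (x r : ℝ) :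
    ‖Complex.exp (x * Complex.I + r)‖ = exp r := by
  simp [Complex.norm_exp]

lemma integrable_exp_ofReal_mul_I_add_ofReal {f : Ω → ℝ} (hf : Measurable f)
    (hL : Measurable L) (hexp : Integrable (fun ω => exp (L ω)) μ) :
    Integrable (fun ω => Complex.exp ((f ω : ℂ) * Complex.I + (L ω : ℂ))) μ :=
  hexp.mono' (by fun_prop) (ae_of_all _ fun ω => (norm_exp_ofReal_mul_I_add_ofReal _ _).le)

lemma continuous_tiltedCharFun (hQ : Measurable Q) (hL : Measurable L)
    (hexp : Integrable (fun ω => exp (L ω)) μ) : Continuous (tiltedCharFun μ Q L) :=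
  continuous_of_dominated (fun θ => by fun_prop)
    (fun θ => ae_of_all _ fun ω => (norm_exp_ofReal_mul_I_add_ofReal _ _).le) hexp
    (ae_of_all _ fun ω => by fun_prop)

lemma integral_cos_mul_exp_eq_re (hQ : Measurable Q) (hL : Measurable L)
    (hexp : Integrable (fun ω => exp (L ω)) μ) (t θ : ℝ) :
    ∫ ω, cos (2 * π * θ * (Q ω - t)) * exp (L ω) ∂μ =
      (Complex.exp (((-(2 * π * θ * t) : ℝ) : ℂ) * Complex.I) * tiltedCharFun μ Q L θ).re := by
  have hshift : ∀ ω, Complex.exp (((-(2 * π * θ * t) : ℝ) : ℂ) * Complex.I) *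
      Complex.exp (((2 * π * θ * Q ω : ℝ) : ℂ) * Complex.I + ((L ω : ℝ) : ℂ)) =
      Complex.exp (((2 * π * θ * (Q ω - t) : ℝ) : ℂ) * Complex.I + ((L ω : ℝ) : ℂ)) := by
    intro ω
    rw [← Complex.exp_add]
    push_cast
    ring_nf
  rw [tiltedCharFun, ← integral_const_mul]
  simp_rw [hshift]
  rw [← Complex.reCLM_apply, ← ContinuousLinearMap.integral_comp_comm _
    (integrable_exp_ofReal_mul_I_add_ofReal (by fun_prop) hL hexp)]
  congr with ω
  rw [Complex.reCLM_apply, Complex.exp_add, ← Complex.ofReal_exp, Complex.re_mul_ofReal,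
    Complex.exp_ofReal_mul_I_re]

lemma integral_fejerKernel_mul_exp_eq [SFinite μ] (hQ : Measurable Q) (hL : Measurable L)
    (hexp : Integrable (fun ω => exp (L ω)) μ) (T t : ℝ) :
    ∫ ω, fejerKernel T (Q ω - t) * exp (L ω) ∂μ =
      ∫ θ in (-T)..T, (1 - |θ| / T) * ∫ ω, cos (2 * π * θ * (Q ω - t)) * exp (L ω) ∂μ := by
  have hprod : Integrable (Function.uncurry fun θ ω =>
      (1 - |θ| / T) * (cos (2 * π * θ * (Q ω - t)) * exp (L ω)))
      ((volume.restrict (Set.uIoc (-T) T)).prod μ) := by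
    refine ((by fun_prop : Continuous fun θ : ℝ => ‖1 - |θ| / T‖).integrableOn_uIoc.mul_prod
        hexp).mono' (by fun_prop) (ae_of_all _ fun p => ?_)
    simp only [Function.uncurry, norm_mul, norm_of_nonneg (exp_pos _).le]
    gcongr
    exact mul_le_of_le_one_left (exp_pos _).le (abs_cos_le_one _)
  simp_rw [← integral_const_mul]
  rw [intervalIntegral_integral_swap hprod]
  congr with ω
  rw [fejerKernel, ← intervalIntegral.integral_mul_const]
  congr with θ
  ring

lemma integral_fejerKernel_mul_exp_le [SFinite μ] (hQ : Measurable Q) (hL : Measurable L)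
    (hexp : Integrable (fun ω => exp (L ω)) μ) {T : ℝ} (hT : 0 < T) (t : ℝ) :
    ∫ ω, fejerKernel T (Q ω - t) * exp (L ω) ∂μ ≤
      ∫ θ in (-T)..T, ‖tiltedCharFun μ Q L θ‖ := by
  have hψ := continuous_tiltedCharFun hQ hL hexp
  simp_rw [integral_fejerKernel_mul_exp_eq hQ hL hexp, integral_cos_mul_exp_eq_re hQ hL hexp]
  refine intervalIntegral.integral_mono_on (by linarith) (Continuous.intervalIntegrable
    (by fun_prop) _ _) (hψ.norm.intervalIntegrable _ _) fun θ hθ => ?_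
  have hw₀ : 0 ≤ 1 - |θ| / T := sub_nonneg.2 ((div_le_one hT).2 (abs_le.2 hθ))
  have hw₁ : 1 - |θ| / T ≤ 1 := sub_le_self _ (div_nonneg (abs_nonneg θ) hT.le)
  set z := Complex.exp (((-(2 * π * θ * t) : ℝ) : ℂ) * Complex.I) * tiltedCharFun μ Q L θ
  calc (1 - |θ| / T) * z.re ≤ (1 - |θ| / T) * ‖z‖ := by gcongr; exact Complex.re_le_norm z
    _ ≤ ‖z‖ := mul_le_of_le_one_left (norm_nonneg _) hw₁
    _ = ‖tiltedCharFun μ Q L θ‖ := by rw [norm_mul, Complex.norm_exp_ofReal_mul_I, one_mul]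

lemma measureReal_le_integral_fejerKernel_mul_exp [IsFiniteMeasure μ] (hQ : Measurable Q)
    (hL : Measurable L) (hexp : Integrable (fun ω => exp (L ω)) μ) {T : ℝ} (hT : 0 < T)
    (t s : ℝ) :
    (μ {ω | |Q ω - t| < 1 / (2 * T) ∧ s ≤ L ω}).toReal ≤
      π ^ 2 / (4 * T) * exp (-s) * ∫ ω, fejerKernel T (Q ω - t) * exp (L ω) ∂μ := by
  have hE : MeasurableSet {ω | |Q ω - t| < 1 / (2 * T) ∧ s ≤ L ω} :=
    (measurableSet_lt (hQ.sub_const t).abs measurable_const).inter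
      (measurableSet_le measurable_const hL)
  have hKm : Measurable fun ω => fejerKernel T (Q ω - t) :=
    (continuous_fejerKernel T).measurable.comp (hQ.sub_const t)
  have hK : Integrable (fun ω => fejerKernel T (Q ω - t) * exp (L ω)) μ := by
    refine (hexp.const_mul T).mono' (hKm.mul hL.exp).aestronglyMeasurable
      (ae_of_all _ fun ω => ?_)
    rw [norm_mul, norm_of_nonneg (fejerKernel_nonneg hT _), norm_of_nonneg (exp_pos _).le]
    exact mul_le_mul_of_nonneg_right (fejerKernel_le hT _) (exp_pos _).le
  rw [← measureReal_def, ← integral_indicator_one hE, ← integral_const_mul]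
  refine integral_mono ((integrable_const 1).indicator hE) (hK.const_mul _) fun ω => ?_
  have hk₀ := fejerKernel_nonneg hT (Q ω - t)
  by_cases hω : ω ∈ {ω | |Q ω - t| < 1 / (2 * T) ∧ s ≤ L ω}
  · have hk : 1 ≤ π ^ 2 / (4 * T) * fejerKernel T (Q ω - t) := by
      have := le_fejerKernel hT hω.1.le
      rw [div_le_iff₀ (by positivity)] at this
      rw [div_mul_eq_mul_div, le_div_iff₀ (by positivity)]
      linarith
    have he : 1 ≤ exp (-s) * exp (L ω) := by
      rw [← exp_add]
      exact one_le_exp (by linarith [hω.2])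
    rw [Set.indicator_of_mem hω, Pi.one_apply]
    calc (1 : ℝ) ≤ (π ^ 2 / (4 * T) * fejerKernel T (Q ω - t)) * (exp (-s) * exp (L ω)) :=
          one_le_mul_of_one_le_of_one_le hk he
      _ = _ := by ring
  · rw [Set.indicator_of_notMem hω]
    positivity

theorem tilted_esseen_of_integrable_exp [IsFiniteMeasure μ] (hQ : Measurable Q)
    (hL : Measurable L) (hexp : Integrable (fun ω => exp (L ω)) μ) (t s : ℝ) {δ : ℝ}
    (hδ : 0 < δ) :
    (μ {ω | |Q ω - t| < δ ∧ s ≤ L ω}).toReal ≤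
      π ^ 2 / 2 * δ * exp (-s) * ∫ θ in (-1 / δ)..(1 / δ), ‖tiltedCharFun μ Q L θ‖ := by
  -- width `T = 1 / (2δ)`, so that `4T / π² ≤ fejerKernel T` on `(-δ, δ)`
  have hT : 0 < 1 / (2 * δ) := by positivity
  have hδT : 1 / (2 * (1 / (2 * δ))) = δ := by field_simp
  have hwiden : ∫ θ in (-(1 / (2 * δ)))..(1 / (2 * δ)), ‖tiltedCharFun μ Q L θ‖ ≤
      ∫ θ in (-1 / δ)..(1 / δ), ‖tiltedCharFun μ Q L θ‖ := by
    have h : 1 / (2 * δ) ≤ 1 / δ := by gcongr; linarith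
    refine intervalIntegral.integral_mono_interval (by rw [neg_div]; linarith) (by linarith) h
      (ae_of_all _ fun _ => norm_nonneg _)
      ((continuous_tiltedCharFun hQ hL hexp).norm.intervalIntegrable _ _)
  have h := measureReal_le_integral_fejerKernel_mul_exp hQ hL hexp hT t s
  rw [hδT] at h
  grw [h, integral_fejerKernel_mul_exp_le hQ hL hexp hT t, hwiden]
  rw [show π ^ 2 / (4 * (1 / (2 * δ))) = π ^ 2 / 2 * δ by field_simp; ring]

end TiltedEsseen

/-- **Lemma (tilted Esseen inequality).**
For every `B > 0` there exists `C > 0` depending only on `B` such that: for every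
`ζ ∈ Γ_B`, every random vector `X ∈ ℝ^n` with i.i.d. coordinates distributed as `ζ`,
every `n × n` real symmetric matrix `M`, `u ∈ ℝ^n`, `t ∈ ℝ`, `s ≥ 0` and `δ > 0`:
`ℙ(|⟨MX,X⟩ − t| < δ ∧ ⟨X,u⟩ ≥ s) ≤ C δ e^{-s} ∫_{-1/δ}^{1/δ} |𝔼 e^{2πiθ⟨MX,X⟩ + ⟨X,u⟩}| dθ`. -/
theorem tilted_esseen (B : ℝ) (hB : 0 < B) :
    ∃ C : ℝ, 0 < C ∧
      ∀ (Ω : Type) [MeasurableSpace Ω] (μ : Measure Ω), IsProbabilityMeasure μ →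
        ∀ (ζ : Ω → ℝ), MemGammaB μ ζ B →
          ∀ (n : ℕ) (X : Fin n → Ω → ℝ), IsIIDVector μ ζ X →
            ∀ (M : Matrix (Fin n) (Fin n) ℝ), M.IsSymm →
              ∀ (u : Fin n → ℝ) (t s δ : ℝ), 0 ≤ s → 0 < δ →
                (μ {ω | |(∑ i, M.mulVec (fun j => X j ω) i * X i ω) - t| < δ ∧
                    s ≤ ∑ i, X i ω * u i}).toReal ≤
                  C * δ * Real.exp (-s) *
                    ∫ θ in (-1/δ)..(1/δ),
                      ‖∫ ω, Complex.exp
                          (((2 * Real.pi * θ * (∑ i, M.mulVec (fun j => X j ω) i * X i ω) : ℝ) : ℂ)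
                              * Complex.I +
                            ((∑ i, X i ω * u i : ℝ) : ℂ)) ∂μ‖ := by
  refine ⟨π ^ 2 / 2, by positivity, fun Ω _ μ _ ζ hζ n X hX M _ u t s δ _ hδ => ?_⟩
  obtain ⟨hζm, -, -, hmom⟩ := hζ
  have hXm := hX.1
  have hQ : Measurable fun ω => ∑ i, M.mulVec (fun j => X j ω) i * X i ω := by
    simp only [Matrix.mulVec, dotProduct]
    fun_prop
  have hL : Measurable fun ω => ∑ i, X i ω * u i := by fun_prop
  exact tilted_esseen_of_integrable_exp hQ hL (hX.integrable_exp_sum_mul hζm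
    (integrable_exp_mul_of_moment_le hζm hB.ne' hmom) u) t s hδ
end
end

section
/- Let ζ be a subgaussian random variable, let X, X' ∈ ℝ^n be independent random vectors each with i.i.d. coordinates distributed as ζ, and let J ∪ I = [n] be a partition of [n]. Let M be an n×n real symmetric matrix, u ∈ ℝ^n and θ ∈ ℝ. Then |𝔼_X e^{2πi θ ⟨M X, X⟩ + ⟨X, u⟩}|² ≤ 𝔼_{X_J, X'_J} [ e^{⟨(X + X')_J, u⟩} · | 𝔼_{X_I} e^{4πi θ ⟨M (X − X')_J, X_I⟩ + 2⟨X_I, u⟩} | ]. -/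
/-!
Write `X = X_J + X_I` with `X_J`, `X_I` independent. Integrating out `X_J` first and applying
Cauchy–Schwarz to the remaining `X_I`-average bounds the left side by
`𝔼_{X_I} |𝔼_{X_J} f(X_J + X_I)|²`; expanding the square with an independent copy `X'_J` of `X_J`
and exchanging the integrals turns this into `𝔼_{X_J, X'_J} 𝔼_{X_I} f(X_J + X_I) conj f(X'_J + X_I)`.
For the tilted quadratic exponential `f`, symmetry of `M` makes the terms quadratic in `X_I` cancel
in this product, which leaves a factor independent of `X_I`, of modulus `e^{⟨X_J + X'_J, u⟩}`, times
the bilinear phase `4πθ⟨M(X_J − X'_J), X_I⟩` tilted by `e^{2⟨X_I, u⟩}`. All integrals involved are finite because the moment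
bounds of a subgaussian variable are summable against the exponential series.
-/

open MeasureTheory ProbabilityTheory Matrix
open scoped BigOperators ENNReal

noncomputable section

/-- A subgaussian real random variable: `‖ζ‖_{ψ₂} < ∞`, i.e. there is `B` with
`(𝔼|ζ|^p)^{1/p} ≤ B √p` for all `p ≥ 1`. -/
def IsSubgaussianRV {Ω : Type*} [MeasurableSpace Ω] (μ : Measure Ω) (ζ : Ω → ℝ) : Prop :=
  Measurable ζ ∧ ∃ B : ℝ,
    ∀ p : ℝ, 1 ≤ p →
      (∫⁻ ω, ENNReal.ofReal (|ζ ω| ^ p) ∂μ) ≤ ENNReal.ofReal ((B * Real.sqrt p) ^ p)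

/-- For `v ∈ ℝ^n` and `J ⊆ [n]`, the vector `v_J` whose `i`-th coordinate is `v i`
for `i ∈ J` and `0` otherwise. -/
def restr {n : ℕ} (J : Finset (Fin n)) (v : Fin n → ℝ) : Fin n → ℝ :=
  fun i => if i ∈ J then v i else 0

open scoped ComplexConjugate Nat

section Decoupling

variable {A C : Type*} [MeasurableSpace A] [MeasurableSpace C]

theorem sq_norm_integral_prod_le (α : Measure A) [SFinite α] (γ : Measure C)
    [IsProbabilityMeasure γ] (f : A × C → ℂ)
    (hf : Integrable (fun z : (A × A) × C => f (z.1.1, z.2) * conj (f (z.1.2, z.2)))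
      ((α.prod α).prod γ)) :
    ‖∫ z, f z ∂α.prod γ‖ ^ 2 ≤
      ∫ w : A × A, ‖∫ c, f (w.1, c) * conj (f (w.2, c)) ∂γ‖ ∂α.prod α := by
  by_cases hfi : Integrable f (α.prod γ)
  swap
  · rw [integral_undef hfi, norm_zero, sq, zero_mul]
    exact integral_nonneg fun _ => norm_nonneg _
  set h : C → ℂ := fun c => ∫ a, f (a, c) ∂α
  have h_sq (c : C) :
      ((‖h c‖ ^ 2 : ℝ) : ℂ) = ∫ w : A × A, f (w.1, c) * conj (f (w.2, c)) ∂α.prod α := by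
    rw [integral_prod_mul (fun a => f (a, c)) (fun a => conj (f (a, c))), integral_conj,
      Complex.mul_conj, Complex.normSq_eq_norm_sq]
  have h_sq_int : Integrable (fun c => ‖h c‖ ^ 2) γ :=
    hf.integral_prod_right.norm.congr <| ae_of_all _ fun c => by
      dsimp only
      rw [← h_sq, Complex.norm_real, Real.norm_of_nonneg (by positivity)]
  have jensen : (∫ c, ‖h c‖ ∂γ) ^ 2 ≤ ∫ c, ‖h c‖ ^ 2 ∂γ :=
    even_two.convexOn_pow.map_integral_le (continuous_pow 2).continuousOn isClosed_univ
      (ae_of_all _ fun _ => Set.mem_univ _) hfi.integral_prod_right.norm h_sq_int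
  calc ‖∫ z, f z ∂α.prod γ‖ ^ 2 = ‖∫ c, h c ∂γ‖ ^ 2 := by rw [integral_prod_symm _ hfi]
    _ ≤ (∫ c, ‖h c‖ ∂γ) ^ 2 := by gcongr; exact norm_integral_le_integral_norm _
    _ ≤ ∫ c, ‖h c‖ ^ 2 ∂γ := jensen
    _ = ‖∫ c, ∫ w : A × A, f (w.1, c) * conj (f (w.2, c)) ∂α.prod α ∂γ‖ := by
      rw [← integral_congr_ae (ae_of_all _ h_sq), integral_complex_ofReal, Complex.norm_real,
        Real.norm_of_nonneg (integral_nonneg fun _ => by positivity)]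
    _ = ‖∫ w : A × A, ∫ c, f (w.1, c) * conj (f (w.2, c)) ∂γ ∂α.prod α‖ := by
      rw [integral_integral_swap (f := fun (c : C) (w : A × A) => f (w.1, c) * conj (f (w.2, c)))
        hf.swap]
    _ ≤ _ := norm_integral_le_integral_norm _

theorem sq_norm_integral_le_of_indepFun {Ω : Type*} [MeasurableSpace Ω] {μ : Measure Ω}
    [IsProbabilityMeasure μ] {Y Y' : Ω → A} {Z : Ω → C} (hY : Measurable Y)
    (hY' : Measurable Y') (hZ : Measurable Z) (hYZ : IndepFun Y Z μ) (hYY' : IndepFun Y Y' μ)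
    (hid : IdentDistrib Y Y' μ μ) {f : A × C → ℂ} (hf : Measurable f) {g : A → ℝ} {h : C → ℝ}
    (hg : Measurable g) (hh : Measurable h) (hfgh : ∀ a c, ‖f (a, c)‖ ≤ g a * h c)
    (hgY : Integrable (fun ω => g (Y ω)) μ) (hhZ : Integrable (fun ω => h (Z ω) ^ 2) μ) :
    ‖∫ ω, f (Y ω, Z ω) ∂μ‖ ^ 2 ≤
      ∫ ω, ‖∫ ω', f (Y ω, Z ω') * conj (f (Y' ω, Z ω')) ∂μ‖ ∂μ := by
  set α := μ.map Y
  set γ := μ.map Z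
  have : IsProbabilityMeasure γ := Measure.isProbabilityMeasure_map hZ.aemeasurable
  have hF : Measurable fun z : (A × A) × C => f (z.1.1, z.2) * conj (f (z.1.2, z.2)) :=
    (hf.comp (measurable_fst.fst.prodMk measurable_snd)).mul
      (Complex.continuous_conj.measurable.comp (hf.comp (measurable_fst.snd.prodMk measurable_snd)))
  have hgα : Integrable g α :=
    (integrable_map_measure hg.aestronglyMeasurable hY.aemeasurable).2 hgY
  have hhγ : Integrable (fun c => h c ^ 2) γ :=
    (integrable_map_measure (hh.pow_const 2).aestronglyMeasurable hZ.aemeasurable).2 hhZ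
  have hF_int : Integrable (fun z : (A × A) × C => f (z.1.1, z.2) * conj (f (z.1.2, z.2)))
      ((α.prod α).prod γ) := by
    refine ((hgα.mul_prod hgα).mul_prod hhγ).mono' hF.aestronglyMeasurable (ae_of_all _ ?_)
    rintro ⟨⟨a, a'⟩, c⟩
    calc ‖f (a, c) * conj (f (a', c))‖ ≤ (g a * h c) * (g a' * h c) := by
          rw [norm_mul, Complex.norm_conj]
          exact mul_le_mul (hfgh a c) (hfgh a' c) (norm_nonneg _)
            ((norm_nonneg _).trans (hfgh a c))
      _ = g a * g a' * h c ^ 2 := by ring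
  have hYZ_law : μ.map (fun ω => (Y ω, Z ω)) = α.prod γ :=
    (indepFun_iff_map_prod_eq_prod_map_map hY.aemeasurable hZ.aemeasurable).1 hYZ
  have hYY'_law : μ.map (fun ω => (Y ω, Y' ω)) = α.prod α := by
    rw [(indepFun_iff_map_prod_eq_prod_map_map hY.aemeasurable hY'.aemeasurable).1 hYY',
      ← hid.map_eq]
  have h_inner : ∀ a a', ∫ ω', f (a, Z ω') * conj (f (a', Z ω')) ∂μ =
      ∫ c, f (a, c) * conj (f (a', c)) ∂γ := fun a a' =>
    (integral_map (f := fun c => f (a, c) * conj (f (a', c))) hZ.aemeasurable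
      (hF.comp (measurable_prodMk_left (x := (a, a')))).aestronglyMeasurable).symm
  calc ‖∫ ω, f (Y ω, Z ω) ∂μ‖ ^ 2 = ‖∫ z, f z ∂α.prod γ‖ ^ 2 := by
        rw [← hYZ_law, integral_map (hY.prodMk hZ).aemeasurable hf.aestronglyMeasurable]
    _ ≤ ∫ w : A × A, ‖∫ c, f (w.1, c) * conj (f (w.2, c)) ∂γ‖ ∂α.prod α :=
        sq_norm_integral_prod_le α γ f hF_int
    _ = ∫ ω, ‖∫ ω', f (Y ω, Z ω') * conj (f (Y' ω, Z ω')) ∂μ‖ ∂μ := by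
        rw [← hYY'_law, integral_map (hY.prodMk hY').aemeasurable
          hF.stronglyMeasurable.integral_prod_right'.norm.aestronglyMeasurable]
        simp only [h_inner]

end Decoupling

theorem summable_mul_sqrt_pow_div_factorial (C : ℝ) :
    Summable fun k : ℕ => (C * √k) ^ k / k ! := by
  refine summable_geometric_two.of_norm_bounded_eventually_nat ?_
  filter_upwards [(Real.tendsto_sqrt_atTop.comp tendsto_natCast_atTop_atTop).eventually_ge_atTop
    (2 * |C| * Real.exp 1)] with k hk
  have h_fac : ((k : ℝ) / Real.exp 1) ^ k ≤ k ! := by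
    rw [div_pow, div_le_iff₀ (by positivity), ← Real.exp_nat_mul, mul_one, mul_comm,
      ← div_le_iff₀ (by positivity)]
    exact Real.pow_div_factorial_le_exp _ (Nat.cast_nonneg k) k
  have h_base : 2 * (|C| * √k) ≤ k / Real.exp 1 := by
    rw [le_div_iff₀ (Real.exp_pos 1)]
    calc 2 * (|C| * √k) * Real.exp 1 = 2 * |C| * Real.exp 1 * √k := by ring
      _ ≤ √k * √k := mul_le_mul_of_nonneg_right hk (Real.sqrt_nonneg _)
      _ = k := Real.mul_self_sqrt (Nat.cast_nonneg k)
  rw [norm_div, norm_pow, norm_mul, Real.norm_of_nonneg (Real.sqrt_nonneg _), Real.norm_eq_abs,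
    RCLike.norm_natCast, div_le_iff₀ (by positivity)]
  calc (|C| * √k) ^ k = (1 / 2) ^ k * (2 * (|C| * √k)) ^ k := by rw [← mul_pow]; ring_nf
    _ ≤ (1 / 2) ^ k * ((k : ℝ) / Real.exp 1) ^ k := by gcongr
    _ ≤ (1 / 2) ^ k * k ! := by gcongr

theorem ofReal_exp_mul_le_tsum (c x : ℝ) :
    ENNReal.ofReal (Real.exp (c * x)) ≤
      ∑' k : ℕ, ENNReal.ofReal (|c| ^ k / k !) * ENNReal.ofReal (|x| ^ k) := by
  have h_exp : Real.exp (|c| * |x|) = ∑' k : ℕ, (|c| * |x|) ^ k / k ! := by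
    rw [Real.exp_eq_exp_ℝ, NormedSpace.exp_eq_tsum_div]
  calc ENNReal.ofReal (Real.exp (c * x)) ≤ ENNReal.ofReal (Real.exp (|c| * |x|)) :=
        ENNReal.ofReal_le_ofReal (Real.exp_le_exp.2 ((le_abs_self _).trans (abs_mul c x).le))
    _ = ∑' k : ℕ, ENNReal.ofReal ((|c| * |x|) ^ k / k !) := by
        rw [h_exp, ENNReal.ofReal_tsum_of_nonneg (fun k => by positivity)
          (Real.summable_pow_div_factorial _)]
    _ = _ := by
        congr 1 with k
        rw [← ENNReal.ofReal_mul (by positivity)]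
        ring_nf

namespace IsSubgaussianRV

variable {Ω : Type*} [MeasurableSpace Ω] {μ : Measure Ω} [IsProbabilityMeasure μ] {ζ : Ω → ℝ}

theorem lintegral_abs_pow_le (hζ : IsSubgaussianRV μ ζ) :
    ∃ C, 0 ≤ C ∧ ∀ k : ℕ, ∫⁻ ω, ENNReal.ofReal (|ζ ω| ^ k) ∂μ ≤ ENNReal.ofReal ((C * √k) ^ k) := by
  obtain ⟨-, B, hB⟩ := hζ
  refine ⟨|B|, abs_nonneg B, fun k => ?_⟩
  rcases k.eq_zero_or_pos with rfl | hk
  · simp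
  calc ∫⁻ ω, ENNReal.ofReal (|ζ ω| ^ k) ∂μ ≤ ENNReal.ofReal ((B * √k) ^ k) := by
        simpa only [Real.rpow_natCast] using hB k (Nat.one_le_cast.2 hk)
    _ ≤ ENNReal.ofReal ((|B| * √k) ^ k) := ENNReal.ofReal_le_ofReal <|
        (le_abs_self _).trans_eq (by rw [abs_pow, abs_mul, abs_of_nonneg (Real.sqrt_nonneg _)])

theorem integrable_exp_mul (hζ : IsSubgaussianRV μ ζ) (c : ℝ) :
    Integrable (fun ω => Real.exp (c * ζ ω)) μ := by
  obtain ⟨C, hC0, hC⟩ := hζ.lintegral_abs_pow_le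
  have h_pow_meas (k : ℕ) : Measurable fun ω => ENNReal.ofReal (|ζ ω| ^ k) :=
    ENNReal.measurable_ofReal.comp (hζ.1.abs.pow_const k)
  refine ⟨(Real.measurable_exp.comp (hζ.1.const_mul c)).aestronglyMeasurable, ?_⟩
  rw [hasFiniteIntegral_iff_ofReal (ae_of_all _ fun _ => (Real.exp_pos _).le)]
  calc ∫⁻ ω, ENNReal.ofReal (Real.exp (c * ζ ω)) ∂μ
      ≤ ∫⁻ ω, ∑' k : ℕ, ENNReal.ofReal (|c| ^ k / k !) * ENNReal.ofReal (|ζ ω| ^ k) ∂μ :=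
        lintegral_mono fun ω => ofReal_exp_mul_le_tsum c (ζ ω)
    _ = ∑' k : ℕ, ENNReal.ofReal (|c| ^ k / k !) * ∫⁻ ω, ENNReal.ofReal (|ζ ω| ^ k) ∂μ := by
        rw [lintegral_tsum fun k => ((h_pow_meas k).const_mul _).aemeasurable]
        simp_rw [lintegral_const_mul _ (h_pow_meas _)]
    _ ≤ ∑' k : ℕ, ENNReal.ofReal (|c| ^ k / k !) * ENNReal.ofReal ((C * √k) ^ k) := by
        gcongr with k
        exact hC k
    _ = ENNReal.ofReal (∑' k : ℕ, ((|c| * C) * √k) ^ k / k !) := by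
        rw [ENNReal.ofReal_tsum_of_nonneg (fun k => by positivity)
          (summable_mul_sqrt_pow_div_factorial _)]
        congr 1 with k
        rw [← ENNReal.ofReal_mul (by positivity)]
        ring_nf
    _ < ⊤ := ENNReal.ofReal_lt_top

theorem integrable_exp_mul_of_map_eq (hζ : IsSubgaussianRV μ ζ) {ξ : Ω → ℝ} (hξ : Measurable ξ)
    (h_law : μ.map ξ = μ.map ζ) (c : ℝ) : Integrable (fun ω => Real.exp (c * ξ ω)) μ :=
  ((IdentDistrib.mk hξ.aemeasurable hζ.1.aemeasurable h_law).comp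
    (measurable_const_mul c).exp).integrable_iff.2 (hζ.integrable_exp_mul c)

end IsSubgaussianRV

section Restriction

variable {n : ℕ}

theorem continuous_restr (J : Finset (Fin n)) : Continuous (restr J) :=
  continuous_pi fun i => by
    by_cases h : i ∈ J
    · simpa [restr, h] using continuous_apply i
    · simpa [restr, h] using continuous_const

theorem restr_add (J : Finset (Fin n)) (v w : Fin n → ℝ) :
    restr J (v + w) = restr J v + restr J w := by
  funext i
  by_cases h : i ∈ J <;> simp [restr, h]

theorem restr_sub (J : Finset (Fin n)) (v w : Fin n → ℝ) :
    restr J (v - w) = restr J v - restr J w := by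
  funext i
  by_cases h : i ∈ J <;> simp [restr, h]

theorem restr_add_restr {J I : Finset (Fin n)} (hJI : Disjoint J I) (hJIunion : J ∪ I = Finset.univ)
    (v : Fin n → ℝ) : restr J v + restr I v = v := by
  funext i
  have hi : i ∈ J ∪ I := hJIunion ▸ Finset.mem_univ i
  by_cases hJ : i ∈ J
  · simp [restr, hJ, Finset.disjoint_left.1 hJI hJ]
  · simp [restr, hJ, (Finset.mem_union.1 hi).resolve_left hJ]

theorem restr_dotProduct (J : Finset (Fin n)) (v w : Fin n → ℝ) :
    restr J v ⬝ᵥ w = restr J w ⬝ᵥ v := by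
  simp only [dotProduct, restr]
  refine Finset.sum_congr rfl fun i _ => ?_
  split_ifs <;> ring

theorem measurable_restr_comp (J : Finset (Fin n)) {Ω : Type*} [MeasurableSpace Ω]
    {V : Fin n → Ω → ℝ} (hV : ∀ i, Measurable (V i)) :
    Measurable fun ω => restr J fun j => V j ω :=
  (continuous_restr J).measurable.comp (measurable_pi_lambda _ hV)

theorem dependsOn_restr_comp {κ : Type*} (e : Fin n ↪ κ) (J : Finset (Fin n)) :
    DependsOn (fun x : κ → ℝ => restr J fun j => x (e j)) (J.map e) := by
  intro x y hxy
  funext i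
  by_cases h : i ∈ J
  · simpa [restr, h] using hxy (e i) (by simpa using h)
  · simp [restr, h]

end Restriction

namespace ProbabilityTheory

theorem iIndepFun.indepFun_comp_of_dependsOn {Ω ι E β γ : Type*} [MeasurableSpace Ω]
    {μ : Measure Ω} [MeasurableSpace E] [Inhabited E] [MeasurableSpace β] [MeasurableSpace γ]
    {g : ι → Ω → E} (hg : iIndepFun g μ) (hg_meas : ∀ i, Measurable (g i))
    {S T : Finset ι} (hST : Disjoint S T) {F : (ι → E) → β} {G : (ι → E) → γ}
    (hF : Measurable F) (hG : Measurable G) (hFS : DependsOn F S) (hGT : DependsOn G T) :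
    IndepFun (fun ω => F (fun i => g i ω)) (fun ω => G (fun i => g i ω)) μ := by
  classical
  let extend (S : Finset ι) (w : S → E) (i : ι) : E := if h : i ∈ S then w ⟨i, h⟩ else default
  have h_meas (S : Finset ι) : Measurable (extend S) := measurable_pi_lambda _ fun i => by
    by_cases h : i ∈ S
    · simpa [extend, h] using measurable_pi_apply (⟨i, h⟩ : S)
    · simp [extend, h]
  convert (hg.indepFun_finset S T hST hg_meas).comp (hF.comp (h_meas S)) (hG.comp (h_meas T))
    using 1 <;> funext ω
  exacts [hFS fun i hi => by simp [extend, Finset.mem_coe.1 hi],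
    hGT fun i hi => by simp [extend, Finset.mem_coe.1 hi]]

theorem iIndepFun.identDistrib_pi {Ω ι E : Type*} [Fintype ι] [MeasurableSpace Ω]
    {μ : Measure Ω} [MeasurableSpace E] {X X' : ι → Ω → E} (hX : iIndepFun X μ)
    (hX' : iIndepFun X' μ) (hm : ∀ i, Measurable (X i)) (hm' : ∀ i, Measurable (X' i))
    (h_law : ∀ i, μ.map (X i) = μ.map (X' i)) :
    IdentDistrib (fun ω i => X i ω) (fun ω i => X' i ω) μ μ where
  aemeasurable_fst := (measurable_pi_lambda _ hm).aemeasurable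
  aemeasurable_snd := (measurable_pi_lambda _ hm').aemeasurable
  map_eq := by
    rw [hX.map_fun_eq_pi_map fun i => (hm i).aemeasurable,
      hX'.map_fun_eq_pi_map fun i => (hm' i).aemeasurable, funext h_law]

theorem iIndepFun.integrable_exp_dotProduct {Ω ι : Type*} [Fintype ι] [MeasurableSpace Ω]
    {μ : Measure Ω} {X : ι → Ω → ℝ} (hX : iIndepFun X μ) (hm : ∀ i, Measurable (X i))
    (h_exp : ∀ i c, Integrable (fun ω => Real.exp (c * X i ω)) μ) (v : ι → ℝ) :
    Integrable (fun ω => Real.exp (v ⬝ᵥ fun i => X i ω)) μ := by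
  have := hX.isProbabilityMeasure
  have h_indep : iIndepFun (fun i ω => v i * X i ω) μ :=
    hX.comp (fun i x => v i * x) fun i => measurable_const_mul (v i)
  have h := h_indep.integrable_exp_mul_sum (t := 1) (fun i => (hm i).const_mul (v i))
    (s := Finset.univ) fun i _ => by simpa only [one_mul] using h_exp i (v i)
  simpa only [one_mul, Finset.sum_apply, dotProduct] using h

theorem iIndepFun.indepFun_restr_comp {Ω κ : Type*} {n : ℕ} [MeasurableSpace Ω]
    {μ : Measure Ω} {g : κ → Ω → ℝ} (hg : iIndepFun g μ) (hg_meas : ∀ k, Measurable (g k))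
    {J I : Finset (Fin n)} (e e' : Fin n ↪ κ) (hJI : Disjoint (J.map e) (I.map e')) :
    IndepFun (fun ω => restr J fun j => g (e j) ω) (fun ω => restr I fun j => g (e' j) ω) μ :=
  hg.indepFun_comp_of_dependsOn hg_meas hJI
    (measurable_restr_comp J fun _ => measurable_pi_apply _)
    (measurable_restr_comp I fun _ => measurable_pi_apply _)
    (dependsOn_restr_comp e J) (dependsOn_restr_comp e' I)

theorem iIndepFun.integrable_exp_mul_restr_dotProduct {Ω : Type*} {n : ℕ}
    [MeasurableSpace Ω] {μ : Measure Ω} {X : Fin n → Ω → ℝ} (hX : iIndepFun X μ)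
    (hm : ∀ i, Measurable (X i)) (h_exp : ∀ i c, Integrable (fun ω => Real.exp (c * X i ω)) μ)
    (J : Finset (Fin n)) (t : ℝ) (u : Fin n → ℝ) :
    Integrable (fun ω => Real.exp (t * ((restr J fun j => X j ω) ⬝ᵥ u))) μ :=
  (hX.integrable_exp_dotProduct hm h_exp (t • restr J u)).congr <| ae_of_all _ fun ω => by
    simp only [smul_dotProduct, smul_eq_mul, restr_dotProduct J u]

end ProbabilityTheory

theorem Matrix.IsSymm.mulVec_dotProduct_comm {ι R : Type*} [Fintype ι] [CommSemiring R]
    {M : Matrix ι ι R} (hM : M.IsSymm) (a c : ι → R) : M *ᵥ a ⬝ᵥ c = M *ᵥ c ⬝ᵥ a := by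
  rw [dotProduct_comm, dotProduct_mulVec, ← mulVec_transpose, hM.eq]

theorem Matrix.IsSymm.mulVec_add_dotProduct_sub {ι R : Type*} [Fintype ι] [CommRing R]
    {M : Matrix ι ι R} (hM : M.IsSymm) (a a' c : ι → R) :
    M *ᵥ (a + c) ⬝ᵥ (a + c) - M *ᵥ (a' + c) ⬝ᵥ (a' + c) =
      M *ᵥ a ⬝ᵥ a - M *ᵥ a' ⬝ᵥ a' + 2 * (M *ᵥ (a - a') ⬝ᵥ c) := by
  simp only [mulVec_add, mulVec_sub, add_dotProduct, dotProduct_add, sub_dotProduct,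
    hM.mulVec_dotProduct_comm c]
  ring

section TiltedQuadraticExp

variable {ι : Type*} [Fintype ι] (θ : ℝ) (M : Matrix ι ι ℝ) (u : ι → ℝ)

def tiltedQuadraticExp (x : ι → ℝ) : ℂ :=
  Complex.exp (((2 * Real.pi * θ * (M *ᵥ x ⬝ᵥ x) : ℝ) : ℂ) * Complex.I + ((x ⬝ᵥ u : ℝ) : ℂ))

theorem norm_tiltedQuadraticExp (x : ι → ℝ) :
    ‖tiltedQuadraticExp θ M u x‖ = Real.exp (x ⬝ᵥ u) := by
  simp [tiltedQuadraticExp, Complex.norm_exp]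

theorem continuous_tiltedQuadraticExp : Continuous (tiltedQuadraticExp θ M u) := by
  unfold tiltedQuadraticExp
  fun_prop

theorem tiltedQuadraticExp_add_mul_conj (hM : M.IsSymm) (a a' c : ι → ℝ) :
    tiltedQuadraticExp θ M u (a + c) * conj (tiltedQuadraticExp θ M u (a' + c)) =
      tiltedQuadraticExp θ M u a * conj (tiltedQuadraticExp θ M u a') *
        Complex.exp (((4 * Real.pi * θ * (M *ᵥ (a - a') ⬝ᵥ c) : ℝ) : ℂ) * Complex.I +
          ((2 * (c ⬝ᵥ u) : ℝ) : ℂ)) := by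
  have h_quad : ((M *ᵥ (a + c) ⬝ᵥ (a + c) : ℝ) : ℂ) - ((M *ᵥ (a' + c) ⬝ᵥ (a' + c) : ℝ) : ℂ) =
      (M *ᵥ a ⬝ᵥ a : ℝ) - (M *ᵥ a' ⬝ᵥ a' : ℝ) + 2 * (M *ᵥ (a - a') ⬝ᵥ c : ℝ) := by
    exact_mod_cast hM.mulVec_add_dotProduct_sub a a' c
  simp only [tiltedQuadraticExp, ← Complex.exp_conj, ← Complex.exp_add, map_add, map_mul,
    Complex.conj_ofReal, Complex.conj_I, add_dotProduct]
  congr 1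
  push_cast
  linear_combination (2 * Real.pi * θ * Complex.I) * h_quad

theorem sq_norm_integral_tiltedQuadraticExp_le {Ω : Type*} [MeasurableSpace Ω] {μ : Measure Ω}
    [IsProbabilityMeasure μ] (hM : M.IsSymm) {Y Y' Z : Ω → ι → ℝ}
    (hY : Measurable Y) (hY' : Measurable Y') (hZ : Measurable Z) (hYZ : IndepFun Y Z μ)
    (hYY' : IndepFun Y Y' μ) (hid : IdentDistrib Y Y' μ μ)
    (hY_exp : Integrable (fun ω => Real.exp (Y ω ⬝ᵥ u)) μ)
    (hZ_exp : Integrable (fun ω => Real.exp (2 * (Z ω ⬝ᵥ u))) μ) :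
    ‖∫ ω, tiltedQuadraticExp θ M u (Y ω + Z ω) ∂μ‖ ^ 2 ≤
      ∫ ω, Real.exp ((Y ω + Y' ω) ⬝ᵥ u) *
        ‖∫ ω', Complex.exp (((4 * Real.pi * θ * (M *ᵥ (Y ω - Y' ω) ⬝ᵥ Z ω') : ℝ) : ℂ) *
          Complex.I + ((2 * (Z ω' ⬝ᵥ u) : ℝ) : ℂ)) ∂μ‖ ∂μ := by
  have h_lin : Measurable fun a : ι → ℝ => a ⬝ᵥ u :=
    (continuous_id.dotProduct continuous_const).measurable
  refine (sq_norm_integral_le_of_indepFun hY hY' hZ hYZ hYY' hid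
    ((continuous_tiltedQuadraticExp θ M u).comp continuous_add).measurable h_lin.exp h_lin.exp
    (fun a c => ?_) hY_exp (hZ_exp.congr (ae_of_all _ fun ω => ?_))).trans_eq
    (integral_congr_ae (ae_of_all _ fun ω => ?_))
  · rw [Function.comp_apply, norm_tiltedQuadraticExp, add_dotProduct, Real.exp_add]
  · simp only [two_mul, Real.exp_add, sq]
  · simp only [Function.comp_apply, tiltedQuadraticExp_add_mul_conj θ M u hM, integral_const_mul,
      norm_mul, Complex.norm_conj, norm_tiltedQuadraticExp, ← Real.exp_add, ← add_dotProduct]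

end TiltedQuadraticExp

/-- **Lemma (decoupling with an exponential tilt).**
Let `ζ` be subgaussian, let `X, X' ∈ ℝ^n` be independent random vectors with i.i.d.
coordinates distributed as `ζ` (all `2n` coordinates jointly independent), and let
`J ∪ I = [n]` be a partition.  For an `n × n` real symmetric matrix `M`, `u ∈ ℝ^n`
and `θ ∈ ℝ`:
`|𝔼_X e^{2πiθ⟨MX,X⟩+⟨X,u⟩}|² ≤ 𝔼_{X_J,X'_J}[e^{⟨(X+X')_J,u⟩}·|𝔼_{X_I} e^{4πiθ⟨M(X−X')_J,X_I⟩+2⟨X_I,u⟩}|]`. -/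
theorem decoupling_with_exponential_tilt
    (Ω : Type) [MeasurableSpace Ω] (μ : Measure Ω) [IsProbabilityMeasure μ]
    (ζ : Ω → ℝ) (hζ : IsSubgaussianRV μ ζ)
    (n : ℕ) (X X' : Fin n → Ω → ℝ)
    (hm : ∀ i, Measurable (X i)) (hm' : ∀ i, Measurable (X' i))
    (hid : ∀ i, Measure.map (X i) μ = Measure.map ζ μ)
    (hid' : ∀ i, Measure.map (X' i) μ = Measure.map ζ μ)
    (hindep : iIndepFun (Sum.elim X X') μ)
    (J I : Finset (Fin n)) (hJI : Disjoint J I) (hJIunion : J ∪ I = Finset.univ)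
    (M : Matrix (Fin n) (Fin n) ℝ) (hM : M.IsSymm) (u : Fin n → ℝ) (θ : ℝ) :
    ‖∫ ω, Complex.exp
        (((2 * Real.pi * θ * (∑ i, M.mulVec (fun j => X j ω) i * X i ω) : ℝ) : ℂ)
            * Complex.I +
          ((∑ i, X i ω * u i : ℝ) : ℂ)) ∂μ‖ ^ 2 ≤
      ∫ ω, Real.exp (∑ i, restr J (fun j => X j ω + X' j ω) i * u i) *
        ‖∫ ω', Complex.exp
            (((4 * Real.pi * θ *
                (∑ i, M.mulVec (restr J (fun j => X j ω - X' j ω)) i *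
                  restr I (fun j => X j ω') i) : ℝ) : ℂ) * Complex.I +
              ((2 * ∑ i, restr I (fun j => X j ω') i * u i : ℝ) : ℂ)) ∂μ‖ ∂μ := by
  set Y : Ω → Fin n → ℝ := fun ω => restr J fun j => X j ω
  set Y' : Ω → Fin n → ℝ := fun ω => restr J fun j => X' j ω
  set Z : Ω → Fin n → ℝ := fun ω => restr I fun j => X j ω
  have hX : iIndepFun X μ := hindep.precomp (g := Sum.inl) Sum.inl_injective
  have hX' : iIndepFun X' μ := hindep.precomp (g := Sum.inr) Sum.inr_injective
  have h_meas : ∀ k, Measurable (Sum.elim X X' k) := by rintro (i | i); exacts [hm i, hm' i]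
  have h_exp (i : Fin n) := hζ.integrable_exp_mul_of_map_eq (hm i) (hid i)
  have hYZ : IndepFun Y Z μ :=
    hindep.indepFun_restr_comp h_meas .inl .inl ((Finset.disjoint_map _).2 hJI)
  have hYY' : IndepFun Y Y' μ :=
    hindep.indepFun_restr_comp h_meas .inl .inr (Finset.disjoint_map_inl_map_inr J J)
  have hYY'_law : IdentDistrib Y Y' μ μ :=
    (hX.identDistrib_pi hX' hm hm' fun i => (hid i).trans (hid' i).symm).comp
      (continuous_restr J).measurable
  calc _ = ‖∫ ω, tiltedQuadraticExp θ M u (Y ω + Z ω) ∂μ‖ ^ 2 := by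
        simp only [Y, Z, restr_add_restr hJI hJIunion]
        rfl
    _ ≤ _ := sq_norm_integral_tiltedQuadraticExp_le θ M u hM (measurable_restr_comp J hm)
        (measurable_restr_comp J hm') (measurable_restr_comp I hm) hYZ hYY' hYY'_law
        (by simpa only [one_mul] using hX.integrable_exp_mul_restr_dotProduct hm h_exp J 1 u)
        (hX.integrable_exp_mul_restr_dotProduct hm h_exp I 2 u)
    _ = _ := by
        simp only [Y, Z, ← restr_add, ← restr_sub]
        rfl
end
end

section
/- Let n ≥ 2 and let M be an n×n real symmetric matrix. Let λ be an eigenvalue of M with unit eigenvector u, let j ∈ [n], and let λ' be an eigenvalue of the minor M^{(j)} (obtained from M by deleting row and column j) with unit eigenvector v. Let X^{(j)} ∈ ℝ^{n-1} denote the j-th column of M with its j-th entry removed. Then |u_j| · |⟨v, X^{(j)}⟩| ≤ |λ − λ'|. -/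
open Matrix
open scoped BigOperators

noncomputable section

/-- **Fact (eigenvalue–minor inequality).**
Let `M` be an `(n+1) × (n+1)` real symmetric matrix (of size at least `2`), let `λ` be
an eigenvalue of `M` with unit eigenvector `u`, let `j` be an index, and let `λ'` be an
eigenvalue of the minor `M^{(j)}` (row and column `j` deleted) with unit eigenvector
`v`.  If `X^{(j)}` is the `j`-th column of `M` with its `j`-th entry removed, then
`|u_j| · |⟨v, X^{(j)}⟩| ≤ |λ − λ'|`. -/
theorem eigenvector_minor_inequality
    (n : ℕ) (hn : 1 ≤ n)
    (M : Matrix (Fin (n + 1)) (Fin (n + 1)) ℝ) (hM : M.IsSymm)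
    (lam lam' : ℝ) (u : Fin (n + 1) → ℝ) (j : Fin (n + 1)) (v : Fin n → ℝ)
    (hu : euclNorm u = 1) (hu_eig : M.mulVec u = lam • u)
    (hv : euclNorm v = 1)
    (hv_eig : (M.submatrix j.succAbove j.succAbove).mulVec v = lam' • v) :
    |u j| * |∑ i, v i * M (j.succAbove i) j| ≤ |lam - lam'| := by
  set σ := j.succAbove with hσ
  -- norms squared
  have husq : ∑ k, u k ^ 2 = 1 := by
    have h0 : 0 ≤ ∑ k, u k ^ 2 := Finset.sum_nonneg fun _ _ => sq_nonneg _
    unfold euclNorm at hu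
    nlinarith [Real.sq_sqrt h0]
  have hvsq : ∑ i, v i ^ 2 = 1 := by
    have h0 : 0 ≤ ∑ i, v i ^ 2 := Finset.sum_nonneg fun _ _ => sq_nonneg _
    unfold euclNorm at hv
    nlinarith [Real.sq_sqrt h0]
  set S := ∑ i, v i * M (σ i) j with hS
  set T := ∑ i, v i * u (σ i) with hT
  have h1 : ∀ i, (∑ i', M (σ i) (σ i') * u (σ i')) + M (σ i) j * u j = lam * u (σ i) := by
    intro i
    have h := congrFun hu_eig (σ i)
    simp only [mulVec, dotProduct, Pi.smul_apply, smul_eq_mul] at h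
    rw [Fin.sum_univ_succAbove (fun k => M (σ i) k * u k) j] at h
    linarith
  have h2 : ∀ i', ∑ i, M (σ i') (σ i) * v i = lam' * v i' := by
    intro i'
    have h := congrFun hv_eig i'
    simpa [mulVec, dotProduct] using h
  have key : (lam - lam') * T = u j * S := by
    have e1 : ∑ i, v i * ((∑ i', M (σ i) (σ i') * u (σ i')) + M (σ i) j * u j)
        = ∑ i, v i * (lam * u (σ i)) := Finset.sum_congr rfl fun i _ => by rw [h1 i]
    have e2 : ∑ i, v i * ∑ i', M (σ i) (σ i') * u (σ i') = lam' * T := by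
      have : ∑ i, v i * ∑ i', M (σ i) (σ i') * u (σ i')
          = ∑ i', u (σ i') * ∑ i, M (σ i') (σ i) * v i := by
        simp_rw [Finset.mul_sum]
        rw [Finset.sum_comm]
        refine Finset.sum_congr rfl fun i' _ => Finset.sum_congr rfl fun i _ => ?_
        rw [hM.apply (σ i) (σ i')]; ring
      rw [this]
      simp_rw [h2]
      rw [hT, Finset.mul_sum]
      exact Finset.sum_congr rfl fun i _ => by ring
    have e3 : ∑ i, v i * (lam * u (σ i)) = lam * T := by
      rw [hT, Finset.mul_sum]; exact Finset.sum_congr rfl fun i _ => by ring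
    have e4 : ∑ i, v i * ((∑ i', M (σ i) (σ i') * u (σ i')) + M (σ i) j * u j)
        = (∑ i, v i * ∑ i', M (σ i) (σ i') * u (σ i')) + u j * S := by
      rw [hS, Finset.mul_sum, ← Finset.sum_add_distrib]
      exact Finset.sum_congr rfl fun i _ => by ring
    rw [e4, e2, e3] at e1
    linarith
  -- |T| ≤ 1
  have hTsq : T ^ 2 ≤ 1 := by
    have cs := Finset.sum_mul_sq_le_sq_mul_sq Finset.univ v (fun i => u (σ i))
    have husplit : ∑ k, u k ^ 2 = u j ^ 2 + ∑ i, u (σ i) ^ 2 :=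
      Fin.sum_univ_succAbove (fun k => u k ^ 2) j
    have hle : ∑ i, u (σ i) ^ 2 ≤ 1 := by nlinarith [sq_nonneg (u j)]
    have h0 : 0 ≤ ∑ i, v i ^ 2 := Finset.sum_nonneg fun _ _ => sq_nonneg _
    calc T ^ 2 ≤ (∑ i, v i ^ 2) * ∑ i, u (σ i) ^ 2 := cs
      _ ≤ 1 := by nlinarith [Finset.sum_nonneg (fun i (_ : i ∈ Finset.univ) => sq_nonneg (u (σ i)))]
  have hTle : |T| ≤ 1 := by nlinarith [sq_abs T, abs_nonneg T]
  calc |u j| * |S| = |u j * S| := (abs_mul _ _).symm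
    _ = |(lam - lam') * T| := by rw [key]
    _ = |lam - lam'| * |T| := abs_mul _ _
    _ ≤ |lam - lam'| * 1 := by
        exact mul_le_mul_of_nonneg_left hTle (abs_nonneg _)
    _ = |lam - lam'| := mul_one _
end
end
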